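/- Bures distance between tensor product states: Let ρ_i, σ_i ∈ S_d for i = 1, …, n, and set ρ^{(n)} = ρ_1 ⊗ … ⊗ ρ_n and σ^{(n)} = σ_1 ⊗ … ⊗ σ_n. Then 1 − exp(−Σ_{i=1}^n d_B²(ρ_i,σ_i)) ≤ d_B²(ρ^{(n)}, σ^{(n)}) ≤ Σ_{i=1}^n d_B²(ρ_i,σ_i). -/

import Mathlib

/-!
Fidelity is multiplicative on tensor products, because the square root of a tensor product of
positive semidefinite matrices is the tensor product of their square roots. Hence, with
`xᵢ = d_B²(ρᵢ, σᵢ) = 1 - F(ρᵢ, σᵢ) ∈ [0, 1]`, we get `d_B²(ρ⁽ⁿ⁾, σ⁽ⁿ⁾) = 1 - ∏ (1 - xᵢ)`, and the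
two bounds are the elementary inequalities `1 - ∑ xᵢ ≤ ∏ (1 - xᵢ) ≤ exp (-∑ xᵢ)`.

The substantial input is `F(ρ, σ) ≤ 1`: if `U` is the partial isometry in the polar
decomposition of `√σ √ρ`, then `F(ρ, σ) = Re tr ((√σ U)ᴴ √ρ)`, which by AM-GM is at most
`(tr (Uᴴ σ U) + tr ρ) / 2 ≤ (tr σ + tr ρ) / 2 = 1`.
-/

open scoped Matrix ComplexOrder
open Matrix

section Defs

variable {m : Type*}

/-- The square root of a positive semidefinite matrix (as in the older Mathlib). -/
noncomputable def Matrix.PosSemidef.sqrt {n 𝕜 : Type*} [Fintype n] [RCLike 𝕜] [DecidableEq n]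
    {A : Matrix n n 𝕜} (hA : A.PosSemidef) : Matrix n n 𝕜 :=
  (hA.1.eigenvectorUnitary : Matrix n n 𝕜) * diagonal ((↑) ∘ Real.sqrt ∘ hA.1.eigenvalues) *
    (star (hA.1.eigenvectorUnitary : Matrix n n 𝕜))

/-- The trace norm `‖X‖₁ = tr √(XᴴX)`. -/
noncomputable def traceNorm [Fintype m] [DecidableEq m] (X : Matrix m m ℂ) : ℝ :=
  ((Matrix.posSemidef_conjTranspose_mul_self X).sqrt.trace).re

/-- The trace distance `d_tr(ρ,σ) = ‖ρ - σ‖₁ / 2`. -/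
noncomputable def trDist [Fintype m] [DecidableEq m] (ρ σ : Matrix m m ℂ) : ℝ :=
  traceNorm (ρ - σ) / 2

/-- A density matrix: positive semidefinite (hence Hermitian) with unit trace. -/
def IsDensityMatrix [Fintype m] (ρ : Matrix m m ℂ) : Prop :=
  ρ.PosSemidef ∧ ρ.trace = 1

/-- Apply a superoperator, given by its matrix representation
(rows/columns indexed by matrix entry positions), to a matrix. -/
noncomputable def appS [Fintype m] (S : Matrix (m × m) (m × m) ℂ) (ρ : Matrix m m ℂ) :
    Matrix m m ℂ :=
  Matrix.of fun i j => ∑ p : m × m, S (i, j) p * ρ p.1 p.2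

/-- The Choi matrix of a superoperator. -/
def choiMatrix [Fintype m] (S : Matrix (m × m) (m × m) ℂ) : Matrix (m × m) (m × m) ℂ :=
  Matrix.of fun p q => S (p.2, q.2) (p.1, q.1)

/-- Quantum channel: completely positive (positive semidefinite Choi matrix)
and trace preserving. -/
def IsQChannelM [Fintype m] (S : Matrix (m × m) (m × m) ℂ) : Prop :=
  (choiMatrix S).PosSemidef ∧ ∀ X : Matrix m m ℂ, (appS S X).trace = X.trace

/-- `expS t L` is the superoperator `e^{tL}`. -/
noncomputable def expS [Fintype m] [DecidableEq m] (t : ℝ) (L : Matrix (m × m) (m × m) ℂ) :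
    Matrix (m × m) (m × m) ℂ :=
  NormedSpace.exp ((t : ℂ) • L)

/-- A Liouvillian: `e^{tL}` is a quantum channel for every `t ≥ 0`. -/
def IsLiouvillianM [Fintype m] [DecidableEq m] (L : Matrix (m × m) (m × m) ℂ) : Prop :=
  ∀ t : ℝ, 0 ≤ t → IsQChannelM (expS t L)

/-- `lam` is the spectral gap of the Liouvillian `L`:
`lam = inf {|Re μ| : μ eigenvalue of L, Re μ < 0}` (and such an eigenvalue exists). -/
def IsGapOf [Fintype m] [DecidableEq m] (L : Matrix (m × m) (m × m) ℂ) (lam : ℝ) : Prop :=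
  (∃ μ ∈ spectrum ℂ L, μ.re < 0) ∧
  lam = sInf {r : ℝ | ∃ μ ∈ spectrum ℂ L, μ.re < 0 ∧ r = -μ.re}

/-- `Tφ` is the peripheral evolution `T_{φ,t} = Σ_{k : Re λ_k = 0} e^{tλ_k} P_k` of the
semigroup generated by `L`: it acts as `e^{tμ}` on each generalized eigenspace of `L` with
`Re μ = 0`, and as `0` on each generalized eigenspace with `Re μ < 0`. -/
def IsPeriphEvolAt [Fintype m] (L : Matrix (m × m) (m × m) ℂ) (t : ℝ)
    (Tφ : Matrix (m × m) (m × m) ℂ) : Prop :=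
  (∀ μ : ℂ, μ.re = 0 → ∀ v ∈ Module.End.maxGenEigenspace (Matrix.mulVecLin L) μ,
      Tφ.mulVec v = Complex.exp (t * μ) • v) ∧
  (∀ μ : ℂ, μ.re < 0 → ∀ v ∈ Module.End.maxGenEigenspace (Matrix.mulVecLin L) μ,
      Tφ.mulVec v = 0)

/-- `Tφ` is the peripheral projection `T_φ = Σ_{k : |μ_k| = 1} μ_k P_k` of the channel `T`:
it acts as `μ •` on each generalized eigenspace of `T` with `|μ| = 1`, and as `0` on each
generalized eigenspace with `|μ| < 1`. -/
def IsPeriphProjM [Fintype m] (T Tφ : Matrix (m × m) (m × m) ℂ) : Prop :=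
  (∀ μ : ℂ, ‖μ‖ = 1 → ∀ v ∈ Module.End.maxGenEigenspace (Matrix.mulVecLin T) μ,
      Tφ.mulVec v = μ • v) ∧
  (∀ μ : ℂ, ‖μ‖ < 1 → ∀ v ∈ Module.End.maxGenEigenspace (Matrix.mulVecLin T) μ,
      Tφ.mulVec v = 0)

/-- The trace-norm contraction `η_tr[T] = sup_ρ d_tr(T(ρ), Tφ(ρ))` over density matrices. -/
noncomputable def etaTR [Fintype m] [DecidableEq m] (T Tφ : Matrix (m × m) (m × m) ℂ) : ℝ :=
  ⨆ ρ : {ρ : Matrix m m ℂ // IsDensityMatrix ρ}, trDist (appS T ρ.1) (appS Tφ ρ.1)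

open scoped Classical in
/-- Matrix square root of a positive semidefinite matrix (junk value `0` otherwise). -/
noncomputable def msqrt [Fintype m] [DecidableEq m] (A : Matrix m m ℂ) : Matrix m m ℂ :=
  if h : A.PosSemidef then h.sqrt else 0

/-- The fidelity `F(ρ,σ) = tr √(√ρ σ √ρ)`. -/
noncomputable def fidelity [Fintype m] [DecidableEq m] (ρ σ : Matrix m m ℂ) : ℝ :=
  ((msqrt (msqrt ρ * σ * msqrt ρ)).trace).re

/-- The Bures distance `d_B(ρ,σ) = √(1 - F(ρ,σ))`. -/
noncomputable def buresDist [Fintype m] [DecidableEq m] (ρ σ : Matrix m m ℂ) : ℝ :=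
  Real.sqrt (1 - fidelity ρ σ)

/-- The Frobenius (Hilbert-Schmidt) norm `‖X‖₂ = √(tr XᴴX)`. -/
noncomputable def frobNorm [Fintype m] (X : Matrix m m ℂ) : ℝ :=
  Real.sqrt ((Xᴴ * X).trace.re)

/-- The operator (spectral) norm `‖A‖_∞`. -/
noncomputable def specNorm [Fintype m] [DecidableEq m] (A : Matrix m m ℂ) : ℝ :=
  ‖(Matrix.toEuclideanLin A).toContinuousLinearMap‖

/-- The superoperator norm `‖S‖_{2→2} = sup {‖S(X)‖₂ : ‖X‖₂ ≤ 1}` induced by the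
Frobenius norm. -/
noncomputable def superNorm22 [Fintype m] (S : Matrix (m × m) (m × m) ℂ) : ℝ :=
  ⨆ X : {X : Matrix m m ℂ // frobNorm X ≤ 1}, frobNorm (appS S X.1)

/-- The dual (Heisenberg-picture) superoperator `S*`, satisfying
`tr[A S*(B)] = tr[S(A) B]`. -/
def dualS [Fintype m] (S : Matrix (m × m) (m × m) ℂ) : Matrix (m × m) (m × m) ℂ :=
  Matrix.of fun p q => S (q.2, q.1) (p.2, p.1)

/-- Matrix representation of the superoperator `ρ ↦ A ρ B`. -/
def sandwichS [Fintype m] (A B : Matrix m m ℂ) : Matrix (m × m) (m × m) ℂ :=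
  Matrix.of fun p q => A p.1 q.1 * B q.2 p.2

/-- The Lindblad dissipator `ρ ↦ L ρ L† − (1/2)L†L ρ − (1/2)ρ L†L` in matrix
representation. -/
noncomputable def lindbladTermS [Fintype m] [DecidableEq m] (L : Matrix m m ℂ) :
    Matrix (m × m) (m × m) ℂ :=
  sandwichS L Lᴴ - (1 / 2 : ℂ) • sandwichS (Lᴴ * L) 1 - (1 / 2 : ℂ) • sandwichS 1 (Lᴴ * L)

/-- Tensor (Kronecker) product of two superoperators. -/
def kronS {m' : Type*} [Fintype m] [Fintype m'] (S : Matrix (m × m) (m × m) ℂ)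
    (S' : Matrix (m' × m') (m' × m') ℂ) :
    Matrix ((m × m') × (m × m')) ((m × m') × (m × m')) ℂ :=
  Matrix.of fun p q =>
    S (p.1.1, p.2.1) (q.1.1, q.2.1) * S' (p.1.2, p.2.2) (q.1.2, q.2.2)

end Defs

/-- `n`-fold tensor power `S^{⊗n}` of a superoperator on `M_d`. -/
noncomputable def tensorPowS (n : ℕ) {d : ℕ} (S : Matrix (Fin d × Fin d) (Fin d × Fin d) ℂ) :
    Matrix ((Fin n → Fin d) × (Fin n → Fin d)) ((Fin n → Fin d) × (Fin n → Fin d)) ℂ :=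
  Matrix.of fun p q => ∏ i, S (p.1 i, p.2 i) (q.1 i, q.2 i)

/-- `n`-fold tensor power `ρ^{⊗n}` of a matrix. -/
noncomputable def tensorPowM (n : ℕ) {d : ℕ} (ρ : Matrix (Fin d) (Fin d) ℂ) :
    Matrix (Fin n → Fin d) (Fin n → Fin d) ℂ :=
  Matrix.of fun x y => ∏ i, ρ (x i) (y i)

/-- Tensor product `A 0 ⊗ A 1 ⊗ … ⊗ A (n-1)` of a family of matrices. -/
noncomputable def tensorFamilyM {n d : ℕ} (A : Fin n → Matrix (Fin d) (Fin d) ℂ) :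
    Matrix (Fin n → Fin d) (Fin n → Fin d) ℂ :=
  Matrix.of fun x y => ∏ i, A i (x i) (y i)

namespace Matrix.PosSemidef

variable {n 𝕜 : Type*} [Fintype n] [DecidableEq n] [RCLike 𝕜] {A : Matrix n n 𝕜}

open scoped MatrixOrder in
lemma sqrt_eq_cfcSqrt (hA : A.PosSemidef) : hA.sqrt = CFC.sqrt A := by
  rw [CFC.sqrt_eq_cfc, cfc_nnreal_eq_real _ A, hA.1.cfc_eq]
  simp only [IsHermitian.cfc, Unitary.conjStarAlgAut_apply, Matrix.PosSemidef.sqrt]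
  congr 2
  ext i j
  simp [Matrix.diagonal_apply, hA.eigenvalues_nonneg i]

open scoped MatrixOrder in
lemma posSemidef_sqrt (hA : A.PosSemidef) : hA.sqrt.PosSemidef := by
  rw [hA.sqrt_eq_cfcSqrt]
  exact (CFC.sqrt_nonneg A).posSemidef

open scoped MatrixOrder in
lemma sqrt_mul_self (hA : A.PosSemidef) : hA.sqrt * hA.sqrt = A := by
  rw [hA.sqrt_eq_cfcSqrt]
  exact CFC.sqrt_mul_sqrt_self A hA.nonneg

open scoped MatrixOrder in
lemma sqrt_eq_of_sq_eq {B : Matrix n n 𝕜} (hA : A.PosSemidef) (hB : B.PosSemidef)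
    (hBA : B ^ 2 = A) : hA.sqrt = B := by
  rw [hA.sqrt_eq_cfcSqrt, CFC.sqrt_eq_iff _ _ hA.nonneg hB.nonneg, ← sq, hBA]

end Matrix.PosSemidef

namespace Matrix
variable {n 𝕜 : Type*} [Fintype n] [RCLike 𝕜]

lemma re_trace_conjTranspose_mul_le {m : Type*} [Fintype m] (B C : Matrix m n 𝕜) :
    RCLike.re (Bᴴ * C).trace ≤ (RCLike.re (Bᴴ * B).trace + RCLike.re (Cᴴ * C).trace) / 2 := by
  have h := (RCLike.nonneg_iff.mp (posSemidef_conjTranspose_mul_self (B - C)).trace_nonneg).1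
  have hCB : RCLike.re (Cᴴ * B).trace = RCLike.re (Bᴴ * C).trace := by
    rw [← conjTranspose_conjTranspose B, ← conjTranspose_mul, trace_conjTranspose,
      conjTranspose_conjTranspose, RCLike.star_def, RCLike.conj_re]
  simp only [conjTranspose_sub, Matrix.sub_mul, Matrix.mul_sub, trace_sub, map_sub] at h
  linarith

lemma exists_isStarProjection_mul_conjTranspose_and_conjTranspose_mul_eq_sqrt [DecidableEq n]
    (X : Matrix n n 𝕜) : ∃ U : Matrix n n 𝕜, IsStarProjection (U * Uᴴ) ∧
      Uᴴ * X = (posSemidef_conjTranspose_mul_self X).sqrt := by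
  set hM := posSemidef_conjTranspose_mul_self X
  let D : (n → ℝ) → Matrix n n 𝕜 := fun a =>
    Unitary.conjStarAlgAut 𝕜 _ hM.1.eigenvectorUnitary (diagonal (RCLike.ofReal ∘ a))
  have hD_mul (a b : n → ℝ) : D a * D b = D (a * b) := by
    simp only [D, ← map_mul, diagonal_mul_diagonal]
    congr 2; funext i; simp
  have hD_conjTranspose (a : n → ℝ) : (D a)ᴴ = D a := by
    rw [← star_eq_conjTranspose, ← map_star, star_eq_conjTranspose, diagonal_conjTranspose]
    congr 2; funext i; simp
  set s : n → ℝ := Real.sqrt ∘ hM.1.eigenvalues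
  have hXX : Xᴴ * X = D (s * s) := by
    conv_lhs => rw [hM.1.spectral_theorem]
    congr 3; funext i
    simp [s, Real.mul_self_sqrt (hM.eigenvalues_nonneg i)]
  -- `U = X (XᴴX)^(-1/2)`, inverted on the support of `XᴴX` only, since `0⁻¹ = 0`
  refine ⟨X * D s⁻¹, ⟨?_, ?_⟩, ?_⟩
  · have hproj : s⁻¹ * s⁻¹ * (s * s) * s⁻¹ * s⁻¹ = s⁻¹ * s⁻¹ := by
      funext i
      simp only [Pi.mul_apply, Pi.inv_apply]
      by_cases h : s i = 0 <;> field_simp [h]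
    rw [IsIdempotentElem, conjTranspose_mul, hD_conjTranspose]
    calc X * D s⁻¹ * (D s⁻¹ * Xᴴ) * (X * D s⁻¹ * (D s⁻¹ * Xᴴ))
        = X * (D s⁻¹ * D s⁻¹ * (Xᴴ * X) * D s⁻¹ * D s⁻¹) * Xᴴ := by
          simp only [Matrix.mul_assoc]
      _ = X * D s⁻¹ * (D s⁻¹ * Xᴴ) := by
          rw [hXX, hD_mul, hD_mul, hD_mul, hD_mul, hproj, ← hD_mul]
          simp only [Matrix.mul_assoc]
  · rw [IsSelfAdjoint, star_eq_conjTranspose, conjTranspose_mul, conjTranspose_conjTranspose]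
  · have hroot : s⁻¹ * (s * s) = s := by
      funext i
      simp only [Pi.mul_apply, Pi.inv_apply]
      by_cases h : s i = 0 <;> field_simp [h]
    rw [conjTranspose_mul, hD_conjTranspose, Matrix.mul_assoc]
    show D s⁻¹ * (Xᴴ * X) = D s
    rw [hXX, hD_mul, hroot]

end Matrix

namespace Matrix.PosSemidef
variable {m : Type*} [Fintype m] {A : Matrix m m ℂ}

lemma re_trace_nonneg (hA : A.PosSemidef) : 0 ≤ A.trace.re :=
  (Complex.nonneg_iff.mp hA.trace_nonneg).1

lemma ofReal_re_trace (hA : A.PosSemidef) : (A.trace.re : ℂ) = A.trace :=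
  (Complex.eq_re_of_ofReal_le (r := 0) (by rw [Complex.ofReal_zero]; exact hA.trace_nonneg)).symm

end Matrix.PosSemidef

section Fidelity
variable {m : Type*} [Fintype m] [DecidableEq m] {A B : Matrix m m ℂ}

lemma msqrt_of_posSemidef (hA : A.PosSemidef) : msqrt A = hA.sqrt := dif_pos hA

lemma posSemidef_msqrt (A : Matrix m m ℂ) : (msqrt A).PosSemidef := by
  unfold msqrt
  split_ifs with hA
  exacts [hA.posSemidef_sqrt, .zero]

lemma msqrt_mul_msqrt (hA : A.PosSemidef) : msqrt A * msqrt A = A := by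
  rw [msqrt_of_posSemidef hA]
  exact hA.sqrt_mul_self

lemma conjTranspose_msqrt (A : Matrix m m ℂ) : (msqrt A)ᴴ = msqrt A :=
  (posSemidef_msqrt A).1.eq

lemma posSemidef_msqrt_mul_mul_msqrt (A : Matrix m m ℂ) (hB : B.PosSemidef) :
    (msqrt A * B * msqrt A).PosSemidef := by
  simpa only [conjTranspose_msqrt A] using hB.mul_mul_conjTranspose_same (msqrt A)

lemma fidelity_nonneg (A B : Matrix m m ℂ) : 0 ≤ fidelity A B :=
  (posSemidef_msqrt _).re_trace_nonneg

open scoped MatrixOrder in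
lemma fidelity_le_one {ρ σ : Matrix m m ℂ} (hρ : IsDensityMatrix ρ) (hσ : IsDensityMatrix σ) :
    fidelity ρ σ ≤ 1 := by
  set R := msqrt ρ
  set S := msqrt σ
  have hR : Rᴴ = R := conjTranspose_msqrt ρ
  have hS : Sᴴ = S := conjTranspose_msqrt σ
  have hRR : Rᴴ * R = ρ := by rw [hR, msqrt_mul_msqrt hρ.1]
  have hSS : Sᴴ * S = σ := by rw [hS, msqrt_mul_msqrt hσ.1]
  obtain ⟨U, hP, hU⟩ := exists_isStarProjection_mul_conjTranspose_and_conjTranspose_mul_eq_sqrt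
    (S * R)
  have hF : fidelity ρ σ = ((S * U)ᴴ * R).trace.re := by
    have hX : R * σ * R = (S * R)ᴴ * (S * R) := by
      rw [← hSS, conjTranspose_mul, hR]
      simp only [Matrix.mul_assoc]
    rw [fidelity, hX, msqrt_of_posSemidef (posSemidef_conjTranspose_mul_self _), ← hU,
      conjTranspose_mul, hS, Matrix.mul_assoc]
  have hSU : ((S * U)ᴴ * (S * U)).trace.re ≤ 1 := by
    have hcut := (hP.one_sub_nonneg.posSemidef.mul_mul_conjTranspose_same S).re_trace_nonneg
    have hcyc : ((S * U)ᴴ * (S * U)).trace = σ.trace - (S * (1 - U * Uᴴ) * Sᴴ).trace := by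
      rw [trace_mul_comm, ← hSS, Matrix.mul_sub, Matrix.sub_mul, trace_sub, mul_one,
        conjTranspose_mul, hS, sub_sub_cancel]
      simp only [Matrix.mul_assoc]
    rw [hcyc, hσ.2, Complex.sub_re, Complex.one_re]
    linarith
  have hRR_tr : (Rᴴ * R).trace.re = 1 := by rw [hRR, hρ.2, Complex.one_re]
  have hamgm := re_trace_conjTranspose_mul_le (S * U) R
  simp only [RCLike.re_to_complex] at hamgm
  linarith

end Fidelity

section Tensor
variable {n d : ℕ}

lemma tensorFamilyM_mul (A B : Fin n → Matrix (Fin d) (Fin d) ℂ) :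
    tensorFamilyM A * tensorFamilyM B = tensorFamilyM (fun i => A i * B i) := by
  ext x z
  simp only [tensorFamilyM, mul_apply, of_apply]
  rw [Finset.prod_univ_sum]
  simp [Fintype.piFinset_univ, ← Finset.prod_mul_distrib]

lemma conjTranspose_tensorFamilyM (A : Fin n → Matrix (Fin d) (Fin d) ℂ) :
    (tensorFamilyM A)ᴴ = tensorFamilyM (fun i => (A i)ᴴ) := by
  ext x y
  simp [tensorFamilyM, conjTranspose_apply]

lemma trace_tensorFamilyM (A : Fin n → Matrix (Fin d) (Fin d) ℂ) :
    (tensorFamilyM A).trace = ∏ i, (A i).trace := by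
  simp only [trace, diag, tensorFamilyM, of_apply]
  rw [Finset.prod_univ_sum]
  simp [Fintype.piFinset_univ]

lemma posSemidef_tensorFamilyM {A : Fin n → Matrix (Fin d) (Fin d) ℂ}
    (hA : ∀ i, (A i).PosSemidef) : (tensorFamilyM A).PosSemidef := by
  have hsq : (tensorFamilyM fun i => (hA i).sqrt)ᴴ * tensorFamilyM (fun i => (hA i).sqrt) =
      tensorFamilyM A := by
    rw [conjTranspose_tensorFamilyM, tensorFamilyM_mul]
    congr 1; funext i
    rw [(hA i).posSemidef_sqrt.1.eq, (hA i).sqrt_mul_self]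
  exact hsq ▸ posSemidef_conjTranspose_mul_self _

lemma IsDensityMatrix.tensorFamilyM {ρ : Fin n → Matrix (Fin d) (Fin d) ℂ}
    (hρ : ∀ i, IsDensityMatrix (ρ i)) : IsDensityMatrix (tensorFamilyM ρ) :=
  ⟨posSemidef_tensorFamilyM fun i => (hρ i).1, by simp [trace_tensorFamilyM, fun i => (hρ i).2]⟩

lemma msqrt_tensorFamilyM {A : Fin n → Matrix (Fin d) (Fin d) ℂ} (hA : ∀ i, (A i).PosSemidef) :
    msqrt (tensorFamilyM A) = tensorFamilyM (fun i => msqrt (A i)) := by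
  rw [msqrt_of_posSemidef (posSemidef_tensorFamilyM hA)]
  refine Matrix.PosSemidef.sqrt_eq_of_sq_eq _
    (posSemidef_tensorFamilyM fun i => posSemidef_msqrt (A i)) ?_
  rw [sq, tensorFamilyM_mul]
  congr 1; funext i
  exact msqrt_mul_msqrt (hA i)

lemma fidelity_tensorFamilyM {A B : Fin n → Matrix (Fin d) (Fin d) ℂ}
    (hA : ∀ i, (A i).PosSemidef) (hB : ∀ i, (B i).PosSemidef) :
    fidelity (tensorFamilyM A) (tensorFamilyM B) = ∏ i, fidelity (A i) (B i) := by
  rw [fidelity, msqrt_tensorFamilyM hA, tensorFamilyM_mul, tensorFamilyM_mul,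
    msqrt_tensorFamilyM fun i => posSemidef_msqrt_mul_mul_msqrt (A i) (hB i),
    trace_tensorFamilyM, ← Finset.prod_congr rfl fun i _ => (posSemidef_msqrt _).ofReal_re_trace,
    ← Complex.ofReal_prod, Complex.ofReal_re]
  rfl

end Tensor

lemma buresDist_sq {m : Type*} [Fintype m] [DecidableEq m] {ρ σ : Matrix m m ℂ}
    (hρ : IsDensityMatrix ρ) (hσ : IsDensityMatrix σ) :
    buresDist ρ σ ^ 2 = 1 - fidelity ρ σ :=
  Real.sq_sqrt (sub_nonneg.mpr (fidelity_le_one hρ hσ))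

namespace Finset
variable {ι : Type*} {s : Finset ι} {x : ι → ℝ}

lemma one_sub_sum_le_prod_one_sub (h0 : ∀ i ∈ s, 0 ≤ x i) (h1 : ∀ i ∈ s, x i ≤ 1) :
    1 - ∑ i ∈ s, x i ≤ ∏ i ∈ s, (1 - x i) := by
  induction s using Finset.cons_induction with
  | empty => simp
  | cons a s ha ih =>
    rw [prod_cons, sum_cons]
    have ih := ih (fun i hi => h0 i (mem_cons_of_mem hi)) (fun i hi => h1 i (mem_cons_of_mem hi))
    have hs : 0 ≤ ∑ i ∈ s, x i := sum_nonneg fun i hi => h0 i (mem_cons_of_mem hi)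
    have ha0 := h0 a (mem_cons_self a s)
    have ha1 := h1 a (mem_cons_self a s)
    nlinarith [mul_le_mul_of_nonneg_left ih (sub_nonneg.mpr ha1)]

lemma prod_one_sub_le_exp_neg_sum (h1 : ∀ i ∈ s, x i ≤ 1) :
    ∏ i ∈ s, (1 - x i) ≤ Real.exp (-∑ i ∈ s, x i) := by
  rw [← sum_neg_distrib, Real.exp_sum]
  refine prod_le_prod (fun i hi => sub_nonneg.mpr (h1 i hi)) fun i _ => ?_
  linarith [Real.add_one_le_exp (-x i)]

end Finset

/-- **Bures distance between tensor product states.** -/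
theorem bures_tensor_product_bounds {d n : ℕ}
    (ρ σ : Fin n → Matrix (Fin d) (Fin d) ℂ)
    (hρ : ∀ i, IsDensityMatrix (ρ i)) (hσ : ∀ i, IsDensityMatrix (σ i)) :
    1 - Real.exp (-∑ i, buresDist (ρ i) (σ i) ^ 2) ≤
        buresDist (tensorFamilyM ρ) (tensorFamilyM σ) ^ 2 ∧
    buresDist (tensorFamilyM ρ) (tensorFamilyM σ) ^ 2 ≤ ∑ i, buresDist (ρ i) (σ i) ^ 2 := by
  have hF i : fidelity (ρ i) (σ i) = 1 - buresDist (ρ i) (σ i) ^ 2 := by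
    rw [buresDist_sq (hρ i) (hσ i), sub_sub_cancel]
  have hd1 i : buresDist (ρ i) (σ i) ^ 2 ≤ 1 := by
    linarith [hF i, fidelity_nonneg (ρ i) (σ i)]
  have hprod : buresDist (tensorFamilyM ρ) (tensorFamilyM σ) ^ 2 =
      1 - ∏ i, (1 - buresDist (ρ i) (σ i) ^ 2) := by
    rw [buresDist_sq (.tensorFamilyM hρ) (.tensorFamilyM hσ),
      fidelity_tensorFamilyM (fun i => (hρ i).1) (fun i => (hσ i).1)]
    simp only [hF]
  rw [hprod]
  constructor
  · linarith [Finset.prod_one_sub_le_exp_neg_sum (s := .univ) fun i _ => hd1 i]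
  · linarith [Finset.one_sub_sum_le_prod_one_sub (s := .univ) (fun i _ => sq_nonneg _)
      fun i _ => hd1 i]
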